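/- arXiv:1704.06683 — 3 statements merged into one kernel-verified Lean document; each statement's English description precedes it below -/
import Mathlib

section
/- Suppose ẑ > 0 satisfies ẑ·ω''(ẑ) = ω'(ẑ) (equivalently φ₁(ẑ) = 1). Then for every complex number z with |z| ≤ ẑ, |z·ω'(z)| + |2ω(z) − z·ω'(z)| ≤ 2·ω(|z|). -/
open scoped BigOperators

/-- The `k`-th derivative of `ω(z) = Σ_{d ∈ Δ} z^d / d!`, as a real function. -/
noncomputable def omegaD (Δ : Set ℕ) (k : ℕ) (z : ℝ) : ℝ :=
  ∑' d : Δ, if k ≤ (d : ℕ) then z ^ ((d : ℕ) - k) / Nat.factorial ((d : ℕ) - k) else 0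

/-- The `k`-th derivative of `ω(z) = Σ_{d ∈ Δ} z^d / d!`, as a complex entire function. -/
noncomputable def omegaC (Δ : Set ℕ) (k : ℕ) (z : ℂ) : ℂ :=
  ∑' d : Δ, if k ≤ (d : ℕ) then z ^ ((d : ℕ) - k) / Nat.factorial ((d : ℕ) - k) else 0

/-!
Rotate `F = z ω'(z)` and `G = 2ω(z) - z ω'(z)` by unit complex numbers `u, v` so that
`‖F‖ + ‖G‖ = uF + vG = Σ_{d ∈ Δ} (d u + (2 - d) v) z^d / d!`. For unit vectors
`‖a u + (2 - a) v‖² = 4 + a(a - 2)‖u - v‖²`, so the coefficient has norm at most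
`2 + d(d - 2)‖u - v‖²/4`. The constant part sums to `2ω(|z|)`; the rest is bounded termwise
(`d(d - 2)` is negative only at `d = 1`, where equality holds) by a multiple of
`Σ_{d ∈ Δ} (d - 2) ẑ^(d-1) / (d-1)! = ẑ ω''(ẑ) - ω'(ẑ) = 0`.
-/

open Nat

section Coefficients

variable {𝕜 : Type*}

def omegaTerm [DivisionRing 𝕜] (k : ℕ) (x : 𝕜) (n : ℕ) : 𝕜 :=
  if k ≤ n then x ^ (n - k) / (n - k)! else 0

lemma omegaD_eq_tsum (Δ : Set ℕ) (k : ℕ) (x : ℝ) :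
    omegaD Δ k x = ∑' d : Δ, omegaTerm k x d := rfl

lemma omegaC_eq_tsum (Δ : Set ℕ) (k : ℕ) (z : ℂ) :
    omegaC Δ k z = ∑' d : Δ, omegaTerm k z d := rfl

lemma summable_omegaTerm [NormedField 𝕜] [NormedAlgebra ℚ 𝕜] [CompleteSpace 𝕜] (k : ℕ) (x : 𝕜) :
    Summable (omegaTerm k x) := by
  rw [← summable_nat_add_iff k]
  simpa [omegaTerm] using NormedSpace.expSeries_div_summable x

@[simp]
lemma omegaTerm_zero [DivisionRing 𝕜] (x : 𝕜) (n : ℕ) : omegaTerm 0 x n = x ^ n / n ! := by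
  simp [omegaTerm]

lemma mul_omegaTerm_one [Field 𝕜] [CharZero 𝕜] (x : 𝕜) (n : ℕ) :
    x * omegaTerm 1 x n = n * x ^ n / n ! := by
  rcases n with _ | m
  · simp [omegaTerm]
  · simp only [omegaTerm, le_add_iff_nonneg_left, zero_le, if_true, add_tsub_cancel_right,
      factorial_succ, cast_mul, pow_succ]
    field_simp

lemma nat_mul_sub_two_mul_pow_div_factorial_le {r x : ℝ} (hr : 0 ≤ r) (hrx : r ≤ x) (n : ℕ) :
    n * (n - 2) * r ^ n / n ! ≤ r * (x * omegaTerm 2 x n - omegaTerm 1 x n) := by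
  match n with
  | 0 => simp [omegaTerm]
  | 1 => norm_num [omegaTerm]
  | m + 2 =>
    have hpow : r ^ (m + 1) ≤ x ^ (m + 1) := pow_le_pow_left₀ hr hrx _
    calc ((m + 2 : ℕ) : ℝ) * ((m + 2 : ℕ) - 2) * r ^ (m + 2) / (m + 2)!
        = r * (m * r ^ (m + 1) / (m + 1)!) := by
          rw [factorial_succ]; push_cast; field_simp; ring
      _ ≤ r * (m * x ^ (m + 1) / (m + 1)!) := by gcongr
      _ = r * (x * omegaTerm 2 x (m + 2) - omegaTerm 1 x (m + 2)) := by
          rw [omegaTerm, omegaTerm, if_pos (by omega), if_pos (by omega),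
            show m + 2 - 2 = m by omega, show m + 2 - 1 = m + 1 by omega, factorial_succ]
          push_cast; field_simp; ring

end Coefficients

lemma norm_smul_add_two_sub_smul_le {E : Type*} [NormedAddCommGroup E] [InnerProductSpace ℝ E]
    {u v : E} (hu : ‖u‖ = 1) (hv : ‖v‖ = 1) (a : ℝ) :
    ‖a • u + (2 - a) • v‖ ≤ 2 + a * (a - 2) * ‖u - v‖ ^ 2 / 4 := by
  have hsq : ‖a • u + (2 - a) • v‖ ^ 2 = 4 + a * (a - 2) * ‖u - v‖ ^ 2 := by
    rw [norm_add_sq_real, norm_sub_sq_real, norm_smul, norm_smul, inner_smul_left,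
      inner_smul_right, hu, hv, mul_pow, mul_pow, Real.norm_eq_abs, Real.norm_eq_abs, sq_abs,
      sq_abs]
    simp only [conj_trivial]
    ring
  nlinarith [norm_nonneg (a • u + (2 - a) • v), sq_nonneg (a * (a - 2) * ‖u - v‖ ^ 2),
    sq_nonneg (‖a • u + (2 - a) • v‖ - 2 - a * (a - 2) * ‖u - v‖ ^ 2 / 4)]

lemma tsum_mul_omegaTerm_two_sub_omegaTerm_one (Δ : Set ℕ) (x : ℝ) :
    ∑' d : Δ, (x * omegaTerm 2 x d - omegaTerm 1 x d) = x * omegaD Δ 2 x - omegaD Δ 1 x := by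
  rw [omegaD_eq_tsum, omegaD_eq_tsum, ← tsum_mul_left]
  exact (((summable_omegaTerm 2 x).subtype Δ).mul_left x).tsum_sub
    ((summable_omegaTerm 1 x).subtype Δ)

lemma norm_rotated_omegaTerm_le {u v z : ℂ} (hu : ‖u‖ = 1) (hv : ‖v‖ = 1) {x : ℝ} (hzx : ‖z‖ ≤ x)
    (n : ℕ) :
    ‖u * (z * omegaTerm 1 z n) + v * (2 * omegaTerm 0 z n - z * omegaTerm 1 z n)‖ ≤
      2 * omegaTerm 0 ‖z‖ n + ‖u - v‖ ^ 2 * ‖z‖ / 4 * (x * omegaTerm 2 x n - omegaTerm 1 x n) := by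
  have hcoef := norm_smul_add_two_sub_smul_le hu hv n
  have hterm := nat_mul_sub_two_mul_pow_div_factorial_le (norm_nonneg z) hzx n
  have hrewrite : u * (z * omegaTerm 1 z n) + v * (2 * omegaTerm 0 z n - z * omegaTerm 1 z n) =
      ((n : ℝ) • u + (2 - n : ℝ) • v) * (z ^ n / n !) := by
    rw [mul_omegaTerm_one, omegaTerm_zero, Complex.real_smul, Complex.real_smul]
    push_cast
    ring
  rw [hrewrite, norm_mul, norm_div, norm_pow, Complex.norm_natCast, omegaTerm_zero]
  calc ‖(n : ℝ) • u + (2 - n : ℝ) • v‖ * (‖z‖ ^ n / n !)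
      ≤ (2 + n * (n - 2) * ‖u - v‖ ^ 2 / 4) * (‖z‖ ^ n / n !) := by gcongr
    _ = 2 * (‖z‖ ^ n / n !) + ‖u - v‖ ^ 2 / 4 * (n * (n - 2) * ‖z‖ ^ n / n !) := by ring
    _ ≤ 2 * (‖z‖ ^ n / n !) +
        ‖u - v‖ ^ 2 / 4 * (‖z‖ * (x * omegaTerm 2 x n - omegaTerm 1 x n)) := by gcongr
    _ = _ := by ring

theorem stmt12_general (Δ : Set ℕ) (zh : ℝ)
    (heq : zh * omegaD Δ 2 zh = omegaD Δ 1 zh) :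
    ∀ z : ℂ, ‖z‖ ≤ zh →
      ‖z * omegaC Δ 1 z‖ + ‖2 * omegaC Δ 0 z - z * omegaC Δ 1 z‖ ≤
        2 * omegaD Δ 0 ‖z‖ := by
  intro z hz
  obtain ⟨u, hu, hF⟩ := Complex.exists_norm_eq_mul_self (z * omegaC Δ 1 z)
  obtain ⟨v, hv, hG⟩ := Complex.exists_norm_eq_mul_self (2 * omegaC Δ 0 z - z * omegaC Δ 1 z)
  set c := ‖u - v‖ ^ 2 * ‖z‖ / 4
  have hsum : ∑' d : Δ, (u * (z * omegaTerm 1 z d) +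
      v * (2 * omegaTerm 0 z d - z * omegaTerm 1 z d)) =
      ‖z * omegaC Δ 1 z‖ + ‖2 * omegaC Δ 0 z - z * omegaC Δ 1 z‖ := by
    rw [hF, hG, omegaC_eq_tsum, omegaC_eq_tsum]
    have h0 := ((summable_omegaTerm 0 z).subtype Δ).hasSum
    have h1 := ((summable_omegaTerm 1 z).subtype Δ).hasSum
    exact (((h1.mul_left z).mul_left u).add
      (((h0.mul_left 2).sub (h1.mul_left z)).mul_left v)).tsum_eq
  have hmajorant : HasSum (fun d : Δ => 2 * omegaTerm 0 ‖z‖ d +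
      c * (zh * omegaTerm 2 zh d - omegaTerm 1 zh d)) (2 * omegaD Δ 0 ‖z‖) := by
    have hzero : HasSum (fun d : Δ => zh * omegaTerm 2 zh d - omegaTerm 1 zh d) 0 := by
      rw [← sub_eq_zero_of_eq heq, ← tsum_mul_omegaTerm_two_sub_omegaTerm_one]
      exact ((((summable_omegaTerm 2 zh).subtype Δ).mul_left zh).sub
        ((summable_omegaTerm 1 zh).subtype Δ)).hasSum
    have h := (((summable_omegaTerm 0 ‖z‖).subtype Δ).hasSum.mul_left 2).add (hzero.mul_left c)
    rwa [mul_zero, add_zero] at h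
  have hbound := tsum_of_norm_bounded hmajorant fun d => norm_rotated_omegaTerm_le hu hv hz d
  rwa [hsum, ← Complex.ofReal_add, Complex.norm_real, Real.norm_of_nonneg (by positivity)] at hbound

/-- if `ẑ·ω''(ẑ) = ω'(ẑ)` (i.e. `φ₁(ẑ) = 1`), then for every complex `z`
with `|z| ≤ ẑ`, `|z ω'(z)| + |2 ω(z) − z ω'(z)| ≤ 2 ω(|z|)`. -/
theorem stmt12 (Δ : Set ℕ) (hΔ : 1 ∈ Δ) (zh : ℝ) (hzh : 0 < zh)
    (heq : zh * omegaD Δ 2 zh = omegaD Δ 1 zh) :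
    ∀ z : ℂ, ‖z‖ ≤ zh →
      ‖z * omegaC Δ 1 z‖ + ‖2 * omegaC Δ 0 z - z * omegaC Δ 1 z‖ ≤
        2 * omegaD Δ 0 ‖z‖ :=
  stmt12_general Δ zh heq
end

section
/- Let γ > β > 0 be real numbers with 1/β − 1/γ ≥ 2. Then for every complex number z with |z| = 1, |1 + γz| + |1 − βz| ≤ 2 + γ − β. -/
/-!
On the unit circle `‖1 + a z‖² = (1 + a)² - 2a(1 - Re z)`, and `√(s² - 2t) ≤ s - t/s`, so
`‖1 + γz‖ ≤ 1 + γ - γ(1 - Re z)/(1 + γ)` and `‖1 - βz‖ ≤ 1 - β + β(1 - Re z)/(1 - β)`.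
The sum is at most `2 + γ - β` as soon as `β/(1 - β) ≤ γ/(1 + γ)`, which after clearing
denominators is `2βγ ≤ γ - β`, i.e. `1/β - 1/γ ≥ 2`.
-/

namespace Complex

lemma norm_one_add_ofReal_mul_sq (a : ℝ) {w : ℂ} (hw : ‖w‖ = 1) :
    ‖1 + (a : ℂ) * w‖ ^ 2 = (1 + a) ^ 2 - 2 * a * (1 - w.re) := by
  have hw' : w.re ^ 2 + w.im ^ 2 = 1 := by
    rw [← sq_norm_sub_sq_re, hw]
    ring
  rw [← normSq_eq_norm_sq, normSq_apply]
  simp only [add_re, add_im, one_re, one_im, re_ofReal_mul, im_ofReal_mul]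
  linear_combination a ^ 2 * hw'

lemma norm_one_add_ofReal_mul_le {a : ℝ} (ha : -1 < a) {w : ℂ} (hw : ‖w‖ = 1) :
    ‖1 + (a : ℂ) * w‖ ≤ 1 + a - a * (1 - w.re) / (1 + a) := by
  have hpos : 0 < 1 + a := by linarith
  have hre : -1 ≤ w.re ∧ w.re ≤ 1 := abs_le.mp (hw ▸ abs_re_le_norm w)
  set t := a * (1 - w.re) / (1 + a) with ht
  have hta : (1 + a) * t = a * (1 - w.re) := by
    rw [ht]
    field_simp
  have hbound : 0 ≤ 1 + a - t := by
    rw [sub_nonneg, ht, div_le_iff₀ hpos]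
    rcases le_or_gt 0 a with ha0 | ha0 <;> nlinarith
  rw [← pow_le_pow_iff_left₀ (norm_nonneg _) hbound two_ne_zero,
    norm_one_add_ofReal_mul_sq a hw]
  nlinarith [sq_nonneg t]

end Complex

lemma lt_one_and_div_one_sub_le_div_one_add {β γ : ℝ} (hβ : 0 < β) (hγ : 0 < γ)
    (h : 2 ≤ 1 / β - 1 / γ) : β < 1 ∧ β / (1 - β) ≤ γ / (1 + γ) := by
  have hβγ : 2 * (β * γ) ≤ γ - β := by
    rw [div_sub_div _ _ hβ.ne' hγ.ne', le_div_iff₀ (mul_pos hβ hγ)] at h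
    linarith
  have hβ1 : β < 1 := by nlinarith
  refine ⟨hβ1, ?_⟩
  rw [div_le_div_iff₀ (by linarith) (by linarith)]
  linarith

/-- if `γ > β > 0` and `1/β − 1/γ ≥ 2`, then for every complex `z` with
`|z| = 1`, `|1 + γz| + |1 − βz| ≤ 2 + γ − β`. -/
theorem stmt13 (γ β : ℝ) (hβ : 0 < β) (hβγ : β < γ) (h : 2 ≤ 1 / β - 1 / γ) :
    ∀ z : ℂ, ‖z‖ = 1 →
      ‖1 + (γ : ℂ) * z‖ + ‖1 - (β : ℂ) * z‖ ≤ 2 + γ - β := by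
  intro z hz
  have hγ : 0 < γ := hβ.trans hβγ
  obtain ⟨hβ1, hcoef⟩ := lt_one_and_div_one_sub_le_div_one_add hβ hγ h
  have hγz := Complex.norm_one_add_ofReal_mul_le (by linarith : -1 < γ) hz
  have hre : 0 ≤ 1 - z.re := sub_nonneg.mpr (hz ▸ Complex.re_le_norm z)
  have hgap : β * (1 - z.re) / (1 - β) ≤ γ * (1 - z.re) / (1 + γ) := by
    rw [mul_comm β, mul_comm γ, mul_div_assoc, mul_div_assoc]
    exact mul_le_mul_of_nonneg_left hcoef hre
  have hβz : ‖1 - (β : ℂ) * z‖ ≤ 1 - β + β * (1 - z.re) / (1 - β) := by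
    simpa only [Complex.ofReal_neg, neg_mul, neg_div, ← sub_eq_add_neg, sub_neg_eq_add]
      using Complex.norm_one_add_ofReal_mul_le (by linarith : -1 < -β) hz
  linarith
end

section
/- For every integer k ≥ 2 and every complex number z, |(k² − 1)·|z|^k + (k+1)·z^k| + |(k² − 1)·|z|^k − (k−1)·z^k| ≤ 2k²·|z|^k. -/
/-!
Put `w = z ^ k`, `r = ‖w‖ = ‖z‖ ^ k`, and let `A`, `B` be the two norms on the left. Expanding
the squares, the cross terms `±2 (k² - 1)(k ± 1) r Re w` cancel in
`A² / (k (k + 1)) + B² / (k (k - 1))`, which therefore equals `2 k² r²` whatever the argument of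
`w`. Since the weights add up to `k (k + 1) + k (k - 1) = 2 k²`, Cauchy–Schwarz (in Sedrakyan's
form) gives `(A + B)² ≤ 2 k² · 2 k² r²`.
-/

theorem add_sq_le_mul_sq_div_add_sq_div {α β A B : ℝ} (hα : 0 < α) (hβ : 0 < β) :
    (A + B) ^ 2 ≤ (α + β) * (A ^ 2 / α + B ^ 2 / β) := by
  rw [← div_le_iff₀' (add_pos hα hβ)]
  simpa [Fin.sum_univ_two] using
    Finset.sq_sum_div_le_sum_sq_div Finset.univ ![A, B] (g := ![α, β])
      (by simp [Fin.forall_fin_two, hα, hβ])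

theorem weighted_sq_norm_add_sq_norm_eq {K : ℝ} (hK : 1 < K) (w : ℂ) :
    ‖((K ^ 2 - 1) * ‖w‖ : ℝ) + ((K : ℂ) + 1) * w‖ ^ 2 / (K * (K + 1)) +
      ‖((K ^ 2 - 1) * ‖w‖ : ℝ) - ((K : ℂ) - 1) * w‖ ^ 2 / (K * (K - 1)) =
      2 * K ^ 2 * ‖w‖ ^ 2 := by
  have hw : ‖w‖ ^ 2 = w.re ^ 2 + w.im ^ 2 := by
    rw [Complex.sq_norm, Complex.normSq_apply]
    ring
  simp only [Complex.sq_norm, Complex.normSq_apply, Complex.add_re, Complex.add_im,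
    Complex.sub_re, Complex.sub_im, Complex.mul_re, Complex.mul_im, Complex.ofReal_re,
    Complex.ofReal_im, Complex.one_re, Complex.one_im]
  have hK₀ : K ≠ 0 := by linarith
  have hK₁ : K - 1 ≠ 0 := by linarith
  have hK₂ : K + 1 ≠ 0 := by linarith
  field_simp
  linear_combination 2 * K * (K ^ 2 - 1) ^ 2 * hw

/-- for every integer `k ≥ 2` and complex `z`,
`|(k²−1)|z|^k + (k+1)z^k| + |(k²−1)|z|^k − (k−1)z^k| ≤ 2k²|z|^k`. -/
theorem stmt14 (k : ℕ) (hk : 2 ≤ k) (z : ℂ) :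
    ‖(((k : ℝ) ^ 2 - 1) * ‖z‖ ^ k : ℝ) + ((k : ℂ) + 1) * z ^ k‖ +
        ‖(((k : ℝ) ^ 2 - 1) * ‖z‖ ^ k : ℝ) - ((k : ℂ) - 1) * z ^ k‖ ≤
      2 * (k : ℝ) ^ 2 * ‖z‖ ^ k := by
  have hK : (1 : ℝ) < k := by exact_mod_cast hk
  have hsum := weighted_sq_norm_add_sq_norm_eq hK (z ^ k)
  simp only [norm_pow, Complex.ofReal_natCast] at hsum
  have hα : (0 : ℝ) < k * (k + 1) := by positivity
  have hβ : (0 : ℝ) < k * (k - 1) := by nlinarith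
  refine (pow_le_pow_iff_left₀ (by positivity) (by positivity) two_ne_zero).1 ?_
  refine (add_sq_le_mul_sq_div_add_sq_div hα hβ).trans_eq ?_
  rw [hsum]
  ring
end
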